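/- Let (𝔒, ∼, ⊙) be a merging system, ρ an equivalence relation on 𝔒 compatible with ∼ and ⊙ such that every ρ-equivalence class is finite, and 𝕆 ⊆ 𝔒 a subset. Then the merging closure 𝕆̂ of 𝕆 in (𝔒, ∼, ⊙) is finite if and only if the merging closure of π_ρ(𝕆) in the quotient merging system (𝔒/ρ, ∼_ρ, ⊙_ρ) is finite. -/

import Mathlib

/-! The projection `π : 𝔒 → 𝔒/ρ` is a homomorphism that reflects `∼`. Hence `π(𝕆̂)` and
`π⁻¹(closure of π(𝕆))` are merging-closed, which sandwiches each closure by the image or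
preimage of the other; the preimage of a finite set is finite because the classes are. -/

/-- A merging system `(𝔒, ∼, ⊙)`: a type together with an alignment relation `sim`
and a partial binary merging operation `merge` defined exactly on aligned pairs. -/
structure MergingSystem (α : Type*) where
  sim : α → α → Prop
  merge : (a : α) → (b : α) → sim a b → α

namespace MergingSystem

variable {α β : Type*}

/-- `h` is a homomorphism of merging systems from `M` to `N`: whenever `a ∼ b`,
`h a ≈ h b` and `h (a ⊙ b) = h a ⫰ h b`. -/
def IsHom (M : MergingSystem α) (N : MergingSystem β) (h : α → β) : Prop :=
  ∀ a b, ∀ hab : M.sim a b, ∃ hab' : N.sim (h a) (h b),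
    h (M.merge a b hab) = N.merge (h a) (h b) hab'

/-- An equivalence relation `ρ` is compatible with the alignment relation and the
merging operation of `M`. -/
def Compatible (M : MergingSystem α) (ρ : α → α → Prop) : Prop :=
  ∀ a a' b b', ρ a a' → ρ b b' →
    (M.sim a b ↔ M.sim a' b') ∧
      ∀ (hab : M.sim a b) (hab' : M.sim a' b'),
        ρ (M.merge a b hab) (M.merge a' b' hab')

/-- `Mq` is the quotient merging system of `M` by the setoid `s`:
`[a] ∼ [b] ↔ a ∼ b` and `[a] ⊙ [b] = [a ⊙ b]`. -/
def IsQuotientOf (M : MergingSystem α) (s : Setoid α)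
    (Mq : MergingSystem (Quotient s)) : Prop :=
  (∀ a b, Mq.sim (Quotient.mk s a) (Quotient.mk s b) ↔ M.sim a b) ∧
    ∀ a b, ∀ hab : M.sim a b, ∀ hab' : Mq.sim (Quotient.mk s a) (Quotient.mk s b),
      Mq.merge (Quotient.mk s a) (Quotient.mk s b) hab' = Quotient.mk s (M.merge a b hab)

/-- Condition (I): every ontology is aligned with itself and `a ⊙ a = a`. -/
def CondI (M : MergingSystem α) : Prop :=
  ∀ a, ∃ haa : M.sim a a, M.merge a a haa = a

/-- Condition (CA): whenever `a ⊙ b` and `b ⊙ c` are defined, both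
`(a ⊙ b) ⊙ c` and `a ⊙ (b ⊙ c)` are defined and equal. -/
def CondCA (M : MergingSystem α) : Prop :=
  ∀ a b c, ∀ hab : M.sim a b, ∀ hbc : M.sim b c,
    ∃ (h₁ : M.sim (M.merge a b hab) c) (h₂ : M.sim a (M.merge b c hbc)),
      M.merge (M.merge a b hab) c h₁ = M.merge a (M.merge b c hbc) h₂

/-- The natural relation `a ≤_⊙ b`: `a ∼ b`, `b ∼ a`, and `a ⊙ b = b = b ⊙ a`. -/
def natLE (M : MergingSystem α) (a b : α) : Prop :=
  ∃ (h₁ : M.sim a b) (h₂ : M.sim b a),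
    M.merge a b h₁ = b ∧ M.merge b a h₂ = b

/-- A subset `P` is merging-closed: for all `a, b ∈ P` with `a ∼ b`, `a ⊙ b ∈ P`. -/
def MergingClosed (M : MergingSystem α) (P : Set α) : Prop :=
  ∀ a ∈ P, ∀ b ∈ P, ∀ hab : M.sim a b, M.merge a b hab ∈ P

/-- `C` is the merging closure of `O` in `M`: the smallest merging-closed
subset containing `O`. -/
def IsMergingClosureOf (M : MergingSystem α) (O C : Set α) : Prop :=
  O ⊆ C ∧ M.MergingClosed C ∧ ∀ P, O ⊆ P → M.MergingClosed P → C ⊆ P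

end MergingSystem

namespace MergingSystem

variable {α β : Type*} {M : MergingSystem α} {N : MergingSystem β} {f : α → β}

theorem IsQuotientOf.isHom {s : Setoid α} {Mq : MergingSystem (Quotient s)}
    (hMq : M.IsQuotientOf s Mq) : M.IsHom Mq (Quotient.mk s) := fun a b hab =>
  let hab' := (hMq.1 a b).mpr hab
  ⟨hab', (hMq.2 a b hab hab').symm⟩

theorem MergingClosed.preimage (hf : M.IsHom N f) {P : Set β} (hP : N.MergingClosed P) :
    M.MergingClosed (f ⁻¹' P) := by
  intro a ha b hb hab
  obtain ⟨hab', hmerge⟩ := hf a b hab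
  simpa only [Set.mem_preimage, hmerge] using hP _ ha _ hb hab'

theorem MergingClosed.image (hf : M.IsHom N f) (hsim : ∀ a b, N.sim (f a) (f b) → M.sim a b)
    {P : Set α} (hP : M.MergingClosed P) : N.MergingClosed (f '' P) := by
  rintro _ ⟨a, ha, rfl⟩ _ ⟨b, hb, rfl⟩ hab'
  obtain ⟨_, hmerge⟩ := hf a b (hsim a b hab')
  exact ⟨_, hP a ha b hb _, hmerge⟩

theorem IsMergingClosureOf.subset_preimage (hf : M.IsHom N f) {O C : Set α} {D : Set β}
    (hC : M.IsMergingClosureOf O C) (hD : N.IsMergingClosureOf (f '' O) D) :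
    C ⊆ f ⁻¹' D :=
  hC.2.2 _ (Set.image_subset_iff.mp hD.1) (hD.2.1.preimage hf)

theorem IsMergingClosureOf.subset_image (hf : M.IsHom N f)
    (hsim : ∀ a b, N.sim (f a) (f b) → M.sim a b) {O C : Set α} {D : Set β}
    (hC : M.IsMergingClosureOf O C) (hD : N.IsMergingClosureOf (f '' O) D) :
    D ⊆ f '' C :=
  hD.2.2 _ (Set.image_mono hC.1) (hC.2.1.image hf hsim)

end MergingSystem

theorem Setoid.finite_preimage_mk_singleton {α : Type*} {s : Setoid α}
    (hfin : ∀ a : α, {b : α | s.r a b}.Finite) (q : Quotient s) :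
    (Quotient.mk s ⁻¹' {q}).Finite := by
  induction q using Quotient.ind with
  | _ a => exact (hfin a).subset fun b hb => s.symm (Quotient.eq.mp hb)

theorem merging_closure_finite_iff_quotient_closure_finite_general
    {α : Type*} (M : MergingSystem α) (s : Setoid α)
    (hfin : ∀ a : α, {b : α | s.r a b}.Finite)
    (Mq : MergingSystem (Quotient s)) (hMq : M.IsQuotientOf s Mq)
    (O C : Set α) (hC : M.IsMergingClosureOf O C)
    (Cq : Set (Quotient s))
    (hCq : Mq.IsMergingClosureOf (Quotient.mk s '' O) Cq) :
    C.Finite ↔ Cq.Finite := by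
  have hπ := hMq.isHom
  constructor
  · intro hCfin
    exact (hCfin.image _).subset (hC.subset_image hπ (fun a b => (hMq.1 a b).mp) hCq)
  · intro hCqfin
    exact (hCqfin.preimage' fun q _ => Setoid.finite_preimage_mk_singleton hfin q).subset
      (hC.subset_preimage hπ hCq)

/-- For a merging system with a compatible equivalence relation `ρ` all of
whose equivalence classes are finite, the merging closure of `𝕆` is finite if and only if
the merging closure of `π_ρ(𝕆)` in the quotient merging system is finite. -/
theorem merging_closure_finite_iff_quotient_closure_finite
    {α : Type*} (M : MergingSystem α) (s : Setoid α)
    (hcompat : M.Compatible s.r)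
    (hfin : ∀ a : α, {b : α | s.r a b}.Finite)
    (Mq : MergingSystem (Quotient s)) (hMq : M.IsQuotientOf s Mq)
    (O C : Set α) (hC : M.IsMergingClosureOf O C)
    (Cq : Set (Quotient s))
    (hCq : Mq.IsMergingClosureOf (Quotient.mk s '' O) Cq) :
    C.Finite ↔ Cq.Finite :=
  merging_closure_finite_iff_quotient_closure_finite_general M s hfin Mq hMq O C hC Cq hCq
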